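/- Let d ≥ 2 and let T : ℝ^{d×d} → ℝ^{d×d} be a linear map on d×d real matrices. Then T satisfies T(P X Qᵀ) = P T(X) Qᵀ for all d×d permutation matrices P, Q and all X ∈ ℝ^{d×d} (i.e., T is an exchangeable matrix layer, equivariant under independent permutations of rows and columns) if and only if there exist real numbers w₁, w₂, w₃, w₄ such that T(X) = w₁ X + w₂ 11ᵀ X + w₃ X 11ᵀ + w₄ 11ᵀ X 11ᵀ for all X ∈ ℝ^{d×d}. -/

import Mathlib

open Matrix

/-- The `d × d` permutation matrix of a permutation `π`, with `P i j = 1` iff `i = π j`. -/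
noncomputable def permMat (d : ℕ) (π : Equiv.Perm (Fin d)) : Matrix (Fin d) (Fin d) ℝ :=
  Matrix.of fun i j => if i = π j then (1 : ℝ) else 0

/-- The `d × d` all-ones matrix `11ᵀ`. -/
noncomputable def onesMat (d : ℕ) : Matrix (Fin d) (Fin d) ℝ :=
  Matrix.of fun _ _ => (1 : ℝ)

/-! A linear layer is determined by the matrices `T (single i j 1)`, and equivariance under
`(σ, τ)` relates the entry `(k, l)` of `T (single i j 1)` to the entry `(σ k, τ l)` of
`T (single (σ i) (τ j) 1)`. Since `Perm n` acts transitively on indices and on pairs of distinct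
indices, that entry depends only on whether `i = k` and whether `j = l`. Its four possible values,
read off from `T (single a a 1)` for some `a ≠ b`, are affine combinations of the four weights. -/

theorem Equiv.Perm.exists_apply_eq_and_apply_eq {α : Type*} [DecidableEq α] {a b c d : α}
    (h : a = b ↔ c = d) : ∃ σ : Equiv.Perm α, σ a = c ∧ σ b = d := by
  by_cases hab : a = b
  · subst hab
    exact ⟨Equiv.swap a c, Equiv.swap_apply_left a c, h.mp rfl ▸ Equiv.swap_apply_left a c⟩
  · exact MulAction.is_two_pretransitive_iff.mp (Equiv.Perm.isMultiplyPretransitive α 2)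
      hab (mt h.mpr hab)

namespace Matrix

variable {n R : Type*}

section CommSemiring

variable [CommSemiring R]

variable (n R) in
def allOnes : Matrix n n R := of fun _ _ => 1

def IsExchangeable (T : Matrix n n R →ₗ[R] Matrix n n R) : Prop :=
  ∀ (σ τ : Equiv.Perm n) (X : Matrix n n R), T (X.submatrix σ τ) = (T X).submatrix σ τ

variable [Fintype n]

theorem allOnes_mul_apply (X : Matrix n n R) (i j : n) : (allOnes n R * X) i j = ∑ k, X k j := by
  simp [allOnes, mul_apply]

theorem mul_allOnes_apply (X : Matrix n n R) (i j : n) : (X * allOnes n R) i j = ∑ k, X i k := by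
  simp [allOnes, mul_apply]

theorem allOnes_mul_submatrix (X : Matrix n n R) (σ τ : Equiv.Perm n) :
    allOnes n R * X.submatrix σ τ = (allOnes n R * X).submatrix σ τ :=
  submatrix_mul_equiv (allOnes n R) X σ σ τ

theorem submatrix_mul_allOnes (X : Matrix n n R) (σ τ : Equiv.Perm n) :
    X.submatrix σ τ * allOnes n R = (X * allOnes n R).submatrix σ τ :=
  submatrix_mul_equiv X (allOnes n R) σ τ τ

def exchangeableLayer (w₁ w₂ w₃ w₄ : R) : Matrix n n R →ₗ[R] Matrix n n R :=
  w₁ • LinearMap.id + w₂ • LinearMap.mulLeft R (allOnes n R)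
    + w₃ • LinearMap.mulRight R (allOnes n R)
    + w₄ • (LinearMap.mulLeft R (allOnes n R) ∘ₗ LinearMap.mulRight R (allOnes n R))

theorem exchangeableLayer_apply (w₁ w₂ w₃ w₄ : R) (X : Matrix n n R) :
    exchangeableLayer w₁ w₂ w₃ w₄ X = w₁ • X + w₂ • (allOnes n R * X) + w₃ • (X * allOnes n R)
      + w₄ • (allOnes n R * X * allOnes n R) := by
  simp [exchangeableLayer, mul_assoc]

theorem isExchangeable_exchangeableLayer (w₁ w₂ w₃ w₄ : R) :
    IsExchangeable (exchangeableLayer (n := n) w₁ w₂ w₃ w₄) := by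
  intro σ τ X
  simp only [exchangeableLayer_apply, allOnes_mul_submatrix, submatrix_mul_allOnes]
  rfl

theorem exchangeableLayer_single_one_apply [DecidableEq n] (w₁ w₂ w₃ w₄ : R) (i j k l : n) :
    exchangeableLayer w₁ w₂ w₃ w₄ (single i j 1) k l =
      (if i = k ∧ j = l then w₁ else 0) + (if j = l then w₂ else 0) + (if i = k then w₃ else 0)
        + w₄ := by
  simp [exchangeableLayer_apply, allOnes_mul_apply, mul_allOnes_apply, single_apply, ite_and]

end CommSemiring

section CommRing

variable [DecidableEq n] [CommRing R] {T : Matrix n n R →ₗ[R] Matrix n n R}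

theorem IsExchangeable.apply_single_one_apply (hT : IsExchangeable T) {i j k l i' j' k' l' : n}
    (hk : i' = k' ↔ i = k) (hl : j' = l' ↔ j = l) :
    T (single i j 1) k l = T (single i' j' 1) k' l' := by
  obtain ⟨σ, rfl, rfl⟩ := Equiv.Perm.exists_apply_eq_and_apply_eq hk
  obtain ⟨τ, rfl, rfl⟩ := Equiv.Perm.exists_apply_eq_and_apply_eq hl
  simpa using (congrFun₂ (hT σ τ (single (σ i') (τ j') 1)) k' l').symm

variable [Fintype n]

theorem IsExchangeable.exists_eq_exchangeableLayer [Nontrivial n] (hT : IsExchangeable T) :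
    ∃ w₁ w₂ w₃ w₄ : R, T = exchangeableLayer w₁ w₂ w₃ w₄ := by
  obtain ⟨a, b, hab⟩ := exists_pair_ne n
  set A := T (single a a 1) a a
  set B := T (single a a 1) a b
  set C := T (single a a 1) b a
  set D := T (single a a 1) b b
  refine ⟨A - B - C + D, C - D, B - D, D, ext_linearMap R fun i j => LinearMap.ext_ring ?_⟩
  ext k l
  have hT' : T (single i j 1) k l =
      T (single a a 1) (if i = k then a else b) (if j = l then a else b) :=
    hT.apply_single_one_apply (by split_ifs <;> simp [*]) (by split_ifs <;> simp [*])
  rw [LinearMap.comp_apply, LinearMap.comp_apply, singleLinearMap_apply, hT',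
    exchangeableLayer_single_one_apply]
  by_cases hk : i = k <;> by_cases hl : j = l <;> simp [hk, hl, A, B, C, D]

theorem isExchangeable_iff [Nontrivial n] :
    IsExchangeable T ↔ ∃ w₁ w₂ w₃ w₄ : R, T = exchangeableLayer w₁ w₂ w₃ w₄ :=
  ⟨IsExchangeable.exists_eq_exchangeableLayer, fun ⟨_, _, _, _, hT⟩ =>
    hT ▸ isExchangeable_exchangeableLayer _ _ _ _⟩

end CommRing

end Matrix

theorem onesMat_eq_allOnes (d : ℕ) : onesMat d = allOnes (Fin d) ℝ := rfl

theorem permMat_eq_permMatrix (d : ℕ) (π : Equiv.Perm (Fin d)) :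
    permMat d π = (π⁻¹).permMatrix ℝ := by
  ext i j
  simp [permMat, Equiv.Perm.inv_def, Equiv.symm_apply_eq]

theorem permMat_mul_mul_transpose (d : ℕ) (π τ : Equiv.Perm (Fin d))
    (X : Matrix (Fin d) (Fin d) ℝ) :
    permMat d π * X * (permMat d τ)ᵀ = X.submatrix π.symm τ.symm := by
  rw [permMat_eq_permMatrix, permMat_eq_permMatrix, transpose_permMatrix, inv_inv,
    PEquiv.toMatrix_toPEquiv_mul, PEquiv.mul_toMatrix_toPEquiv, submatrix_submatrix]
  rfl

theorem isExchangeable_iff_permMat {d : ℕ}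
    (T : Matrix (Fin d) (Fin d) ℝ →ₗ[ℝ] Matrix (Fin d) (Fin d) ℝ) :
    IsExchangeable T ↔ ∀ (π τ : Equiv.Perm (Fin d)) (X : Matrix (Fin d) (Fin d) ℝ),
      T (permMat d π * X * (permMat d τ)ᵀ) = permMat d π * T X * (permMat d τ)ᵀ := by
  simp only [permMat_mul_mul_transpose]
  exact ⟨fun hT π τ X => hT _ _ X, fun h σ τ X => by simpa using h σ.symm τ.symm X⟩

/-- For `d ≥ 2`, a linear map `T` on `d × d` real matrices is an exchangeable matrix layer,
i.e. `T (P X Qᵀ) = P (T X) Qᵀ` for all permutation matrices `P, Q`, iff it has the form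
`T X = w₁ X + w₂ 11ᵀ X + w₃ X 11ᵀ + w₄ 11ᵀ X 11ᵀ` for some reals `w₁, w₂, w₃, w₄`. -/
theorem stmt_2 (d : ℕ) (hd : 2 ≤ d)
    (T : Matrix (Fin d) (Fin d) ℝ →ₗ[ℝ] Matrix (Fin d) (Fin d) ℝ) :
    (∀ (π τ : Equiv.Perm (Fin d)) (X : Matrix (Fin d) (Fin d) ℝ),
        T (permMat d π * X * (permMat d τ)ᵀ) = permMat d π * T X * (permMat d τ)ᵀ) ↔
      ∃ w1 w2 w3 w4 : ℝ, ∀ X : Matrix (Fin d) (Fin d) ℝ,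
        T X = w1 • X + w2 • (onesMat d * X) + w3 • (X * onesMat d)
            + w4 • (onesMat d * X * onesMat d) := by
  have : Nontrivial (Fin d) := Fin.nontrivial_iff_two_le.mpr hd
  rw [← isExchangeable_iff_permMat, isExchangeable_iff]
  simp only [LinearMap.ext_iff, exchangeableLayer_apply, onesMat_eq_allOnes]
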